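/- arXiv:1210.1473 — 3 statements merged into one kernel-verified Lean document; each statement's English description precedes it below -/
import Mathlib

section
/- For a density f symmetric about μ and weakly unimodal, and any δ > 0, the probability P(|θ̂−θ| ≤ δ) = ∫_{θ̂−δ}^{θ̂+δ} f(θ)dθ is maximized over θ̂ ∈ ℝ at θ̂ = μ. -/
open MeasureTheory Set

lemma aux_shift (f : ℝ → ℝ) (μ δ : ℝ)
    (hf_symm : ∀ x, f (μ - x) = f (μ + x))
    (hf_unimodal₁ : ∀ x y, x ≤ y → y ≤ μ → f x ≤ f y)
    (hf_unimodal₂ : ∀ x y, μ ≤ x → x ≤ y → f y ≤ f x)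
    (hδ : 0 ≤ δ) :
    ∀ x, μ - δ ≤ x → f (x + 2 * δ) ≤ f x := by
  intro x hx
  rcases le_or_gt x μ with h | h
  · have hsym : f (x + 2 * δ) = f (2 * μ - x - 2 * δ) := by
      have := hf_symm (x + 2 * δ - μ)
      have e1 : μ + (x + 2 * δ - μ) = x + 2 * δ := by ring
      have e2 : μ - (x + 2 * δ - μ) = 2 * μ - x - 2 * δ := by ring
      rw [e1, e2] at this
      exact this.symm
    rw [hsym]
    exact hf_unimodal₁ _ _ (by linarith) h
  · exact hf_unimodal₂ x (x + 2 * δ) h.le (by linarith)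

lemma aux_main (f : ℝ → ℝ) (μ δ : ℝ)
    (hint : Integrable f)
    (hf_symm : ∀ x, f (μ - x) = f (μ + x))
    (hf_unimodal₁ : ∀ x y, x ≤ y → y ≤ μ → f x ≤ f y)
    (hf_unimodal₂ : ∀ x y, μ ≤ x → x ≤ y → f y ≤ f x)
    (hδ : 0 ≤ δ) (c : ℝ) (hc : μ ≤ c) :
    ∫ θ in (c - δ)..(c + δ), f θ ≤ ∫ θ in (μ - δ)..(μ + δ), f θ := by
  have hI : ∀ a b : ℝ, IntervalIntegrable f volume a b := fun a b => hint.intervalIntegrable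
  have h1 : (∫ θ in (μ - δ)..(c - δ), f θ) + ∫ θ in (c - δ)..(μ + δ), f θ
      = ∫ θ in (μ - δ)..(μ + δ), f θ :=
    intervalIntegral.integral_add_adjacent_intervals (hI _ _) (hI _ _)
  have h2 : (∫ θ in (c - δ)..(μ + δ), f θ) + ∫ θ in (μ + δ)..(c + δ), f θ
      = ∫ θ in (c - δ)..(c + δ), f θ :=
    intervalIntegral.integral_add_adjacent_intervals (hI _ _) (hI _ _)
  have key : ∫ θ in (μ + δ)..(c + δ), f θ ≤ ∫ θ in (μ - δ)..(c - δ), f θ := by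
    have hshift : ∫ x in (μ - δ)..(c - δ), f (x + 2 * δ) = ∫ x in (μ + δ)..(c + δ), f x := by
      rw [intervalIntegral.integral_comp_add_right f (2 * δ)]
      congr 1 <;> ring
    rw [← hshift]
    apply intervalIntegral.integral_mono_on (by linarith)
    · exact ((hint.comp_add_right (2 * δ)).intervalIntegrable)
    · exact hI _ _
    · intro x hx
      exact aux_shift f μ δ hf_symm hf_unimodal₁ hf_unimodal₂ hδ x hx.1
  linarith

/-- For a density `f` symmetric about `μ` and weakly unimodal, and any `δ > 0`,
the probability `∫_{θ̂−δ}^{θ̂+δ} f` is maximized over `θ̂` at `θ̂ = μ`. -/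
theorem interval_prob_maximized_at_mean
    (f : ℝ → ℝ) (μ : ℝ)
    (hf_nonneg : ∀ x, 0 ≤ f x)
    (hf_density : ∫ x, f x = 1)
    (hf_symm : ∀ x, f (μ - x) = f (μ + x))
    (hf_unimodal₁ : ∀ x y, x ≤ y → y ≤ μ → f x ≤ f y)
    (hf_unimodal₂ : ∀ x y, μ ≤ x → x ≤ y → f y ≤ f x)
    (δ : ℝ) (hδ : 0 < δ) :
    ∀ c : ℝ, ∫ θ in Set.Icc (c - δ) (c + δ), f θ ≤ ∫ θ in Set.Icc (μ - δ) (μ + δ), f θ := by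
  have hint : Integrable f := by
    by_contra h
    rw [integral_undef h] at hf_density
    norm_num at hf_density
  intro c
  have hIcc : ∀ a : ℝ, ∫ θ in Set.Icc (a - δ) (a + δ), f θ = ∫ θ in (a - δ)..(a + δ), f θ := by
    intro a
    rw [intervalIntegral.integral_of_le (by linarith), integral_Icc_eq_integral_Ioc]
  rw [hIcc c, hIcc μ]
  rcases le_or_gt μ c with h | h
  · exact aux_main f μ δ hint hf_symm hf_unimodal₁ hf_unimodal₂ hδ.le c h
  · have h2 : ∀ x : ℝ, f (2 * μ - x) = f x := by
      intro x
      have := hf_symm (x - μ)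
      have e1 : μ - (x - μ) = 2 * μ - x := by ring
      have e2 : μ + (x - μ) = x := by ring
      rw [e1, e2] at this
      exact this
    have hrefl : ∫ θ in (c - δ)..(c + δ), f θ
        = ∫ θ in ((2 * μ - c) - δ)..((2 * μ - c) + δ), f θ := by
      calc ∫ θ in (c - δ)..(c + δ), f θ = ∫ θ in (c - δ)..(c + δ), f (2 * μ - θ) := by
            simp only [h2]
        _ = ∫ θ in ((2 * μ - c) - δ)..((2 * μ - c) + δ), f θ := by
            rw [intervalIntegral.integral_comp_sub_left f (2 * μ)]
            congr 1 <;> ring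
    rw [hrefl]
    exact aux_main f μ δ hint hf_symm hf_unimodal₁ hf_unimodal₂ hδ.le (2 * μ - c) (by linarith)
end

section
/- Consider minimizing J(λ) = ∑_{i=1}^N p_i/(r_i + λ_i)^{q/2} over λ_i ≥ 0 with ∑_i λ_i = Λ, where p_i > 0, r_i > 0, q > 0, Λ > 0, and let γ = 2/(q+2). If p_i^γ/r_i ≤ p_j^γ/r_j, λ*_i > 0 and λ*_j = 0, then λ* is not optimal. -/
open Set Finset

/-- Index rule: for minimizing `J(λ) = ∑ p_i/(r_i+λ_i)^{q/2}` over the simplex,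
if `p_i^γ/r_i ≤ p_j^γ/r_j` (with `γ = 2/(q+2)`) while `λ*_i > 0` and `λ*_j = 0`,
then `λ*` is not optimal. -/
theorem index_rule_necessary
    (N : ℕ) (p r : Fin N → ℝ) (q Λ : ℝ)
    (hp : ∀ i, 0 < p i) (hr : ∀ i, 0 < r i) (hq : 0 < q) (hΛ : 0 < Λ)
    (lamStar : Fin N → ℝ)
    (hfeas : (∀ i, 0 ≤ lamStar i) ∧ (∑ i, lamStar i) = Λ)
    (i j : Fin N)
    (hij : p i ^ (2 / (q + 2)) / r i ≤ p j ^ (2 / (q + 2)) / r j)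
    (hi : 0 < lamStar i) (hj : lamStar j = 0) :
    ¬ (∀ lam : Fin N → ℝ, (∀ k, 0 ≤ lam k) → (∑ k, lam k) = Λ →
        (∑ k, p k / (r k + lamStar k) ^ (q / 2)) ≤
          (∑ k, p k / (r k + lam k) ^ (q / 2))) := by
  intro hopt
  have hne : i ≠ j := by rintro rfl; rw [hj] at hi; exact lt_irrefl 0 hi
  set s : ℝ := q / 2 with hs_def
  have hs : 0 < s := by positivity
  set a : ℝ := r i + lamStar i with ha_def
  have ha : 0 < a := add_pos (hr i) hi
  have hra : r i < a := lt_add_of_pos_right _ hi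
  -- Key inequality from the index condition
  have hkey : p i / a ^ (s + 1) < p j / r j ^ (s + 1) := by
    set γ : ℝ := 2 / (q + 2) with hγ_def
    have hq2 : q + 2 ≠ 0 := by positivity
    have hγ1 : γ * (s + 1) = 1 := by rw [hγ_def, hs_def]; field_simp
    have h2 : p i ^ γ * r j ≤ p j ^ γ * r i := by
      rw [div_le_div_iff₀ (hr i) (hr j)] at hij; linarith
    have h3 : (p i ^ γ * r j) ^ (s + 1) ≤ (p j ^ γ * r i) ^ (s + 1) :=
      Real.rpow_le_rpow (mul_nonneg (Real.rpow_nonneg (hp i).le γ) (hr j).le) h2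
        (by positivity)
    rw [Real.mul_rpow (Real.rpow_nonneg (hp i).le γ) (le_of_lt (hr j)),
        Real.mul_rpow (Real.rpow_nonneg (hp j).le γ) (le_of_lt (hr i)),
        ← Real.rpow_mul (le_of_lt (hp i)), ← Real.rpow_mul (le_of_lt (hp j)),
        hγ1, Real.rpow_one, Real.rpow_one] at h3
    have h4 : r i ^ (s + 1) < a ^ (s + 1) :=
      Real.rpow_lt_rpow (le_of_lt (hr i)) hra (by positivity)
    have h5 : p i * r j ^ (s + 1) < p j * a ^ (s + 1) :=
      lt_of_le_of_lt h3 (by nlinarith [hp j])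
    rw [div_lt_div_iff₀ (Real.rpow_pos_of_pos ha _) (Real.rpow_pos_of_pos (hr j) _)]
    linarith
  -- the two-coordinate objective as a function of the shift ε
  set φ : ℝ → ℝ := fun ε => p i / (r i + (lamStar i - ε)) ^ s + p j / (r j + ε) ^ s with hφ_def
  set D : ℝ := s * p i / a ^ (s + 1) + -(s * p j / r j ^ (s + 1)) with hD_def
  have hval : r i + (lamStar i - (0:ℝ)) = a := by rw [ha_def]; ring
  -- derivative of the first term
  have hD1 : HasDerivAt (fun ε : ℝ => p i / (r i + (lamStar i - ε)) ^ s)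
      (s * p i / a ^ (s + 1)) 0 := by
    have hin : HasDerivAt (fun ε : ℝ => r i + (lamStar i - ε)) (-1) 0 := by
      simpa using ((hasDerivAt_id (0:ℝ)).const_sub (lamStar i)).const_add (r i)
    have hpow := hin.rpow_const (p := s) (Or.inl (by rw [hval]; exact ne_of_gt ha))
    have h := (hasDerivAt_const (0:ℝ) (p i)).div hpow
      (by rw [hval]; exact ne_of_gt (Real.rpow_pos_of_pos ha s))
    convert h using 1
    · rfl
    · rfl
    · rfl
    rw [hval]
    have h1 : (a ^ s) ^ 2 = a ^ (s + s) := by rw [sq, ← Real.rpow_add ha]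
    have h2 : a ^ (s - 1) * a ^ (s + 1) = a ^ (s + s) := by
      rw [← Real.rpow_add ha]; ring_nf
    rw [div_eq_div_iff (Real.rpow_pos_of_pos ha _).ne'
        (pow_pos (Real.rpow_pos_of_pos ha s) 2).ne', h1,
        show (0 * a ^ s - p i * (-1 * s * a ^ (s - 1))) * a ^ (s + 1)
          = s * p i * (a ^ (s - 1) * a ^ (s + 1)) from by ring, h2]
  -- derivative of the second term
  have hD2 : HasDerivAt (fun ε : ℝ => p j / (r j + ε) ^ s)
      (-(s * p j / r j ^ (s + 1))) 0 := by
    have hin : HasDerivAt (fun ε : ℝ => r j + ε) 1 0 := by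
      simpa using (hasDerivAt_id (0:ℝ)).const_add (r j)
    have hval2 : r j + (0:ℝ) = r j := add_zero _
    have hpow := hin.rpow_const (p := s) (Or.inl (by rw [hval2]; exact ne_of_gt (hr j)))
    have h := (hasDerivAt_const (0:ℝ) (p j)).div hpow
      (by rw [hval2]; exact ne_of_gt (Real.rpow_pos_of_pos (hr j) s))
    convert h using 1
    · rfl
    · rfl
    · rfl
    rw [hval2]
    have hb := hr j
    have h1 : (r j ^ s) ^ 2 = r j ^ (s + s) := by rw [sq, ← Real.rpow_add hb]
    have h2 : r j ^ (s - 1) * r j ^ (s + 1) = r j ^ (s + s) := by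
      rw [← Real.rpow_add hb]; ring_nf
    rw [← neg_div, div_eq_div_iff (Real.rpow_pos_of_pos hb _).ne'
        (pow_pos (Real.rpow_pos_of_pos hb s) 2).ne', h1,
        show (0 * r j ^ s - p j * (1 * s * r j ^ (s - 1))) * r j ^ (s + 1)
          = -(s * p j) * (r j ^ (s - 1) * r j ^ (s + 1)) from by ring, h2]
  have hDφ : HasDerivAt φ D 0 := hD1.add hD2
  have hDneg : D < 0 := by
    have := mul_lt_mul_of_pos_left hkey hs
    rw [hD_def, mul_div_assoc, mul_div_assoc]
    linarith
  -- find a small ε with φ ε < φ 0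
  have hslope : Filter.Tendsto (slope φ 0) (nhdsWithin 0 (Set.Ioi (0:ℝ))) (nhds D) :=
    (hasDerivAt_iff_tendsto_slope.mp hDφ).mono_left
      (nhdsWithin_mono _ (fun x hx => (ne_of_gt hx : x ≠ 0)))
  have hev : ∀ᶠ ε in nhdsWithin 0 (Set.Ioi (0:ℝ)), slope φ 0 ε < 0 :=
    hslope.eventually_lt_const hDneg
  have hmem : Set.Ioo (0:ℝ) (lamStar i) ∈ nhdsWithin 0 (Set.Ioi (0:ℝ)) :=
    Ioo_mem_nhdsGT_of_mem ⟨le_refl 0, hi⟩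
  obtain ⟨ε, hεs, hεI⟩ :=
    (hev.and (Filter.eventually_of_mem hmem (fun x hx => hx))).exists
  have hε0 : 0 < ε := hεI.1
  have hεlt : ε < lamStar i := hεI.2
  have hφlt : φ ε < φ 0 := by
    rw [slope_def_field] at hεs
    rcases div_neg_iff.mp hεs with ⟨h1, h2⟩ | ⟨h1, h2⟩
    · linarith
    · linarith
  -- construct the competitor
  set lam : Fin N → ℝ :=
    fun k => lamStar k + (if k = j then ε else 0) - (if k = i then ε else 0) with hlam_def
  have hlami : lam i = lamStar i - ε := by simp [hlam_def, hne]
  have hlamj : lam j = ε := by simp [hlam_def, hne.symm, hj]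
  have hlamk : ∀ k, k ≠ i → k ≠ j → lam k = lamStar k := by
    intro k hki hkj; simp [hlam_def, hki, hkj]
  have hnn : ∀ k, 0 ≤ lam k := by
    intro k
    by_cases hki : k = i
    · subst hki; rw [hlami]; linarith
    · by_cases hkj : k = j
      · subst hkj; rw [hlamj]; linarith
      · rw [hlamk k hki hkj]; exact hfeas.1 k
  have hsum : (∑ k, lam k) = Λ := by
    rw [hlam_def]
    rw [Finset.sum_sub_distrib, Finset.sum_add_distrib,
        Finset.sum_ite_eq' Finset.univ j (fun _ => ε),
        Finset.sum_ite_eq' Finset.univ i (fun _ => ε)]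
    simp [hfeas.2]
  -- split the sums
  have hjmem : j ∈ Finset.univ.erase i := Finset.mem_erase.mpr ⟨hne.symm, Finset.mem_univ j⟩
  have hsplit : ∀ g : Fin N → ℝ, (∑ k, g k)
      = g i + (g j + ∑ k ∈ (Finset.univ.erase i).erase j, g k) := by
    intro g
    rw [Finset.add_sum_erase _ g hjmem, Finset.add_sum_erase _ g (Finset.mem_univ i)]
  have htail : ∑ k ∈ (Finset.univ.erase i).erase j, p k / (r k + lam k) ^ s
      = ∑ k ∈ (Finset.univ.erase i).erase j, p k / (r k + lamStar k) ^ s := by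
    refine Finset.sum_congr rfl (fun k hk => ?_)
    have hkj := (Finset.mem_erase.mp hk).1
    have hki := (Finset.mem_erase.mp (Finset.mem_erase.mp hk).2).1
    rw [hlamk k hki hkj]
  have hJlam : (∑ k, p k / (r k + lam k) ^ s) = φ ε
      + ∑ k ∈ (Finset.univ.erase i).erase j, p k / (r k + lamStar k) ^ s := by
    rw [hsplit (fun k => p k / (r k + lam k) ^ s), htail]
    simp only [hlami, hlamj, hφ_def]
    ring
  have hJstar : (∑ k, p k / (r k + lamStar k) ^ s) = φ 0
      + ∑ k ∈ (Finset.univ.erase i).erase j, p k / (r k + lamStar k) ^ s := by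
    rw [hsplit (fun k => p k / (r k + lamStar k) ^ s)]
    simp only [hφ_def, hj, sub_zero, add_zero]
    ring
  have := hopt lam hnn hsum
  rw [hJlam, hJstar] at this
  exact absurd ((add_le_add_iff_right _).mp this) (not_le.mpr hφlt)
end

section
/- For the simplex-constrained minimization of J(λ) = ∑_{i=1}^N p_i/(r_i + λ_i)^{q/2} with ∑λ_i = Λ, λ_i ≥ 0, suppose indices are sorted so that p_1^γ/r_1 ≥ … ≥ p_N^γ/r_N with γ = 2/(q+2), and let k be the unique index with b(k−1) < Λ ≤ b(k), where b(k) = (r_{k+1}/p_{k+1}^γ)·∑_{i=1}^k p_i^γ − ∑_{i=1}^k r_i for k < N and b(N) = ∞, b(0)=0. Then λ*_i = C p_i^γ − r_i for i ≤ k and λ*_i = 0 for i > k, with C = (Λ + ∑_{j=1}^k r_j)/(∑_{j=1}^k p_j^γ), satisfies: λ*_i > 0 for i ≤ k, ∑_i λ*_i = Λ, and the KKT optimality conditions (equal partial derivatives on the support, larger partial derivatives off the support). -/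
open Finset

/-!
Write `w i = p i ^ γ`; sorting makes the thresholds `r i / w i` increasing. The water needed to
raise the first `m` channels to level `c` is `V m c = ∑_{i<m} (c w_i − r_i)`, which is strictly
increasing in `c`, and `b m = V m (r m / w m) = V (m+1) (r m / w m)`, while `C` solves `V k C = Λ`.
So the bracket `b (k−1) < Λ ≤ b k` says that `C` lies strictly above the thresholds of the support
and at or below those off it. On the support `r i + λ*_i = C w_i`, so every `D i` equals
`−(q/2) C^{−1/γ}`; off it `r j ≥ C w j`, and `x ↦ x^{−1/γ}` is antitone.
-/

namespace WaterFilling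

def waterVolume (w r : ℕ → ℝ) (m : ℕ) (c : ℝ) : ℝ :=
  ∑ i ∈ range m, (c * w i - r i)

section

variable {w r : ℕ → ℝ}

theorem waterVolume_eq (m : ℕ) (c : ℝ) :
    waterVolume w r m c = c * ∑ i ∈ range m, w i - ∑ i ∈ range m, r i := by
  rw [waterVolume, sum_sub_distrib, mul_sum]

theorem waterVolume_strictMono {m : ℕ} (hS : 0 < ∑ i ∈ range m, w i) :
    StrictMono (waterVolume w r m) := fun c c' h => by
  simp only [waterVolume_eq]
  exact sub_lt_sub_right (mul_lt_mul_of_pos_right h hS) _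

theorem waterVolume_succ_threshold {m : ℕ} (hw : w m ≠ 0) :
    waterVolume w r (m + 1) (r m / w m) = waterVolume w r m (r m / w m) := by
  rw [waterVolume, sum_range_succ, div_mul_cancel₀ _ hw, sub_self, add_zero, waterVolume]

theorem waterVolume_div_sum (Λ : ℝ) {m : ℕ} (hS : ∑ i ∈ range m, w i ≠ 0) :
    waterVolume w r m ((Λ + ∑ i ∈ range m, r i) / ∑ i ∈ range m, w i) = Λ := by
  rw [waterVolume_eq, div_mul_cancel₀ _ hS, add_sub_cancel_right]

theorem sum_range_pos_of_pos {N m : ℕ} (hw : ∀ i < N, 0 < w i) (hm : 1 ≤ m) (hmN : m ≤ N) :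
    0 < ∑ i ∈ range m, w i :=
  sum_pos (fun i hi => hw i ((mem_range.1 hi).trans_le hmN)) ⟨0, mem_range.2 hm⟩

theorem threshold_lt_of_waterVolume_lt {N k : ℕ} {c : ℝ} (hw : ∀ i < N, 0 < w i)
    (hmono : ∀ i j, i ≤ j → j < N → r i / w i ≤ r j / w j) (hk : 1 ≤ k) (hkN : k ≤ N)
    (h : waterVolume w r (k - 1) (r (k - 1) / w (k - 1)) < waterVolume w r k c) :
    ∀ i < k, r i / w i < c := by
  obtain ⟨m, rfl⟩ : ∃ m, k = m + 1 := ⟨k - 1, by omega⟩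
  rw [Nat.add_sub_cancel, ← waterVolume_succ_threshold (hw m (by omega)).ne'] at h
  intro i hi
  exact (hmono i m (by omega) (by omega)).trans_lt
    ((waterVolume_strictMono (sum_range_pos_of_pos hw hk hkN)).lt_iff_lt.1 h)

theorem le_threshold_of_waterVolume_le {N k : ℕ} {c : ℝ} (hw : ∀ i < N, 0 < w i)
    (hmono : ∀ i j, i ≤ j → j < N → r i / w i ≤ r j / w j) (hk : 1 ≤ k) (hkN : k < N)
    (h : waterVolume w r k c ≤ waterVolume w r k (r k / w k)) :
    ∀ j, k ≤ j → j < N → c ≤ r j / w j := fun j hkj hj =>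
  ((waterVolume_strictMono (sum_range_pos_of_pos hw hk hkN.le)).le_iff_le.1 h).trans
    (hmono k j hkj hj)

end

theorem mul_rpow_neg_inv_mul_rpow {p c γ : ℝ} (hp : 0 < p) (hc : 0 ≤ c) (hγ : γ ≠ 0) :
    p * (c * p ^ γ) ^ (-(1 / γ)) = c ^ (-(1 / γ)) := by
  rw [Real.mul_rpow hc (by positivity), ← Real.rpow_mul hp.le, mul_neg, mul_one_div_cancel hγ,
    Real.rpow_neg_one]
  field_simp

theorem mul_rpow_neg_inv_le {p c a γ : ℝ} (hp : 0 < p) (hc : 0 < c) (hγ : 0 < γ)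
    (ha : c * p ^ γ ≤ a) : p * a ^ (-(1 / γ)) ≤ c ^ (-(1 / γ)) :=
  calc p * a ^ (-(1 / γ)) ≤ p * (c * p ^ γ) ^ (-(1 / γ)) :=
        mul_le_mul_of_nonneg_left
          (Real.rpow_le_rpow_of_nonpos (by positivity) ha (by simp [hγ.le])) hp.le
    _ = c ^ (-(1 / γ)) := mul_rpow_neg_inv_mul_rpow hp hc.le hγ.ne'

end WaterFilling

open WaterFilling

theorem water_filling_solution_general
    (N : ℕ) (p r : ℕ → ℝ) (q Λ : ℝ)
    (hp : ∀ i < N, 0 < p i) (hr : ∀ i < N, 0 < r i) (hq : 0 < q)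
    (γ : ℝ) (hγ : γ = 2 / (q + 2))
    (hsorted : ∀ i j, i ≤ j → j < N → p j ^ γ / r j ≤ p i ^ γ / r i)
    (b : ℕ → ℝ)
    (hb : ∀ k, b k = (r k / p k ^ γ) * (∑ i ∈ Finset.range k, p i ^ γ)
                      - ∑ i ∈ Finset.range k, r i)
    (k : ℕ) (hk1 : 1 ≤ k) (hk2 : k ≤ N)
    (hlow : b (k - 1) < Λ) (hupp : k = N ∨ Λ ≤ b k)
    (C : ℝ)
    (hC : C = (Λ + ∑ j ∈ Finset.range k, r j) / (∑ j ∈ Finset.range k, p j ^ γ))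
    (lamStar : ℕ → ℝ)
    (hlam : ∀ i, lamStar i = if i < k then C * p i ^ γ - r i else 0)
    (D : ℕ → ℝ)
    (hD : ∀ i, D i = -(q / 2) * p i * (r i + lamStar i) ^ (-(1 / γ))) :
    (∀ i < k, 0 < lamStar i) ∧
    (∑ i ∈ Finset.range N, lamStar i) = Λ ∧
    (∀ i < k, ∀ j < k, D i = D j) ∧
    (∀ i < k, ∀ j, k ≤ j → j < N → D i ≤ D j) := by
  have hγ0 : 0 < γ := by rw [hγ]; positivity
  have hw : ∀ i < N, 0 < p i ^ γ := fun i hi => Real.rpow_pos_of_pos (hp i hi) γ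
  have hmono : ∀ i j, i ≤ j → j < N → r i / p i ^ γ ≤ r j / p j ^ γ := fun i j hij hj => by
    simpa only [inv_div] using inv_anti₀ (div_pos (hw j hj) (hr j hj)) (hsorted i j hij hj)
  have hbV : ∀ m, b m = waterVolume (p · ^ γ) r m (r m / p m ^ γ) := fun m => by
    rw [hb, waterVolume_eq]
  have hV : waterVolume (p · ^ γ) r k C = Λ := by
    rw [hC]; exact waterVolume_div_sum Λ (sum_range_pos_of_pos hw hk1 hk2).ne'
  have hbelow := threshold_lt_of_waterVolume_lt hw hmono hk1 hk2 (by rwa [hV, ← hbV])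
  have hC0 : 0 < C := (div_pos (hr 0 (by omega)) (hw 0 (by omega))).trans (hbelow 0 hk1)
  have hDsupp : ∀ i < k, D i = -(q / 2) * C ^ (-(1 / γ)) := fun i hi => by
    rw [hD, hlam, if_pos hi, add_sub_cancel, mul_assoc,
      mul_rpow_neg_inv_mul_rpow (hp i (by omega)) hC0.le hγ0.ne']
  refine ⟨fun i hi => ?_, ?_, fun i hi j hj => by rw [hDsupp i hi, hDsupp j hj],
    fun i hi j hkj hj => ?_⟩
  · rw [hlam, if_pos hi, sub_pos, ← div_lt_iff₀ (hw i (by omega))]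
    exact hbelow i hi
  · rw [← sum_subset (range_subset_range.2 hk2) fun i _ hi => by
      rw [hlam, if_neg (by simpa using hi)], ← hV]
    exact sum_congr rfl fun i hi => by rw [hlam, if_pos (mem_range.1 hi)]
  · have habove := le_threshold_of_waterVolume_le hw hmono hk1 (by omega)
      (by rw [hV, ← hbV]; exact hupp.resolve_left (by omega)) j hkj hj
    rw [hDsupp i hi, hD, hlam, if_neg (by omega), add_zero, mul_assoc]
    exact mul_le_mul_of_nonpos_left
      (mul_rpow_neg_inv_le (hp j hj) hC0 hγ0 ((le_div_iff₀ (hw j hj)).1 habove))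
      (by linarith)

/-- Explicit water-filling solution: with sorted indices and `k` determined by
`b(k−1) < Λ ≤ b(k)`, the allocation `λ*_i = C p_i^γ − r_i` for `i < k`, `0` otherwise,
with `C = (Λ + ∑_{j<k} r_j)/(∑_{j<k} p_j^γ)`, is positive on its support, feasible,
and satisfies the KKT conditions (partial derivatives equal on the support and
no larger than those off the support). -/
theorem water_filling_solution
    (N : ℕ) (hN : 1 ≤ N) (p r : ℕ → ℝ) (q Λ : ℝ)
    (hp : ∀ i < N, 0 < p i) (hr : ∀ i < N, 0 < r i) (hq : 0 < q) (hΛ : 0 < Λ)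
    (γ : ℝ) (hγ : γ = 2 / (q + 2))
    (hsorted : ∀ i j, i ≤ j → j < N → p j ^ γ / r j ≤ p i ^ γ / r i)
    (b : ℕ → ℝ)
    (hb : ∀ k, b k = (r k / p k ^ γ) * (∑ i ∈ Finset.range k, p i ^ γ)
                      - ∑ i ∈ Finset.range k, r i)
    (k : ℕ) (hk1 : 1 ≤ k) (hk2 : k ≤ N)
    (hlow : b (k - 1) < Λ) (hupp : k = N ∨ Λ ≤ b k)
    (C : ℝ)
    (hC : C = (Λ + ∑ j ∈ Finset.range k, r j) / (∑ j ∈ Finset.range k, p j ^ γ))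
    (lamStar : ℕ → ℝ)
    (hlam : ∀ i, lamStar i = if i < k then C * p i ^ γ - r i else 0)
    (D : ℕ → ℝ)
    (hD : ∀ i, D i = -(q / 2) * p i * (r i + lamStar i) ^ (-(1 / γ))) :
    (∀ i < k, 0 < lamStar i) ∧
    (∑ i ∈ Finset.range N, lamStar i) = Λ ∧
    (∀ i < k, ∀ j < k, D i = D j) ∧
    (∀ i < k, ∀ j, k ≤ j → j < N → D i ≤ D j) :=
  water_filling_solution_general N p r q Λ hp hr hq γ hγ hsorted b hb k hk1 hk2 hlow hupp C hC
    lamStar hlam D hD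
end
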